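/- In the ring of integers ℤ[ζ_7] of ℚ(ζ_7), the set {1, ζ_7, ζ_7²} is a basis of ℤ[ζ_7] as a module over O_{ℚ(√(-7))}, the ring of integers of ℚ(√(-7)). -/

import Mathlib

/-!
Put `ω = 1 + ζ + ζ² + ζ⁴ = (1 + √-7)/2`. Then `ω² = ω - 2`, so `ℤ[ω] = ℤ + ℤω`, and
`ζ³ = 1 + ωζ + (ω - 1)ζ²`, so `ζ` is a root of a monic cubic over `ℤ[ω]` and `1, ζ, ζ²` span
`ℤ[ζ]` over `ℤ[ω]`. For independence, write the coefficients as `a + bω` with `a, b ∈ ℤ` and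
expand in `1, ζ, …, ζ⁵`, which are linearly independent since the minimal polynomial of `ζ`
is the seventh cyclotomic polynomial; the resulting triangular system forces `a = b = 0`.
-/

open Polynomial Finset

theorem Algebra.mem_span_pow_of_mem_adjoin_singleton {R S : Type*} [CommRing R] [Nontrivial R]
    [CommRing S] [Algebra R S] {p : R[X]} (hp : p.Monic) {x : S} (hx : aeval x p = 0) {y : S}
    (hy : y ∈ Algebra.adjoin R {x}) :
    y ∈ Submodule.span R (Set.range fun i : Fin p.natDegree => x ^ (i : ℕ)) := by
  obtain ⟨f, rfl⟩ := (Algebra.adjoin_singleton_eq_range_aeval R x ▸ hy :)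
  refine PowerBasis.mem_span_pow'.mpr
    ⟨f %ₘ p, (degree_modByMonic_lt f hp).trans_le degree_le_natDegree, ?_⟩
  conv_lhs => rw [← modByMonic_add_div f p]
  simp [hx]

theorem IsPrimitiveRoot.linearIndependent_pow_rat {K : Type*} [Field K] [CharZero K] {ζ : K}
    {n : ℕ} (hn : 0 < n) (hζ : IsPrimitiveRoot ζ n) :
    LinearIndependent ℚ fun i : Fin n.totient => ζ ^ (i : ℕ) := by
  have h := linearIndependent_pow (K := ℚ) ζ
  rwa [← cyclotomic_eq_minpoly_rat hζ hn, natDegree_cyclotomic] at h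

namespace Cyclotomic7

variable {L : Type*} [CommRing L] {ζ : L}

-- `(1 + √-7) / 2` when `ζ` is a primitive seventh root of unity.
def ω (ζ : L) : L := 1 + ζ + ζ ^ 2 + ζ ^ 4

section
variable (hsum : ∑ i ∈ range 7, ζ ^ i = 0)
include hsum

theorem sum_pow_eq_zero : 1 + ζ + ζ ^ 2 + ζ ^ 3 + ζ ^ 4 + ζ ^ 5 + ζ ^ 6 = 0 := by
  simpa [sum_range_succ] using hsum

theorem pow_seven_eq_one : ζ ^ 7 = 1 := by
  linear_combination (ζ - 1) * sum_pow_eq_zero hsum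

theorem ω_sq : ω ζ ^ 2 = ω ζ - 2 := by
  unfold ω; linear_combination 2 * sum_pow_eq_zero hsum + ζ * pow_seven_eq_one hsum

theorem pow_three_eq : ζ ^ 3 = 1 + ω ζ * ζ + (ω ζ - 1) * ζ ^ 2 := by
  unfold ω; linear_combination -sum_pow_eq_zero hsum

theorem exists_int_of_mem_adjoin_ω {y : L} (hy : y ∈ Algebra.adjoin ℤ {ω ζ}) :
    ∃ a b : ℤ, y = a + b * ω ζ := by
  have hp : (X ^ 2 - X + 2 : ℤ[X]).natDegree = 2 := by compute_degree!
  have h := Algebra.mem_span_pow_of_mem_adjoin_singleton (by monicity!)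
    (by simp [ω_sq hsum, map_ofNat] : aeval (ω ζ) (X ^ 2 - X + 2 : ℤ[X]) = 0) hy
  rw [hp, Submodule.mem_span_range_iff_exists_fun] at h
  obtain ⟨c, rfl⟩ := h
  exact ⟨c 0, c 1, by simp [Fin.sum_univ_two, zsmul_eq_mul]⟩

theorem mem_span_pow_of_mem_adjoin [Nontrivial L] {x : L} (hx : x ∈ Algebra.adjoin ℤ {ζ}) :
    x ∈ Submodule.span (Algebra.adjoin ℤ {ω ζ}) (Set.range fun i : Fin 3 => ζ ^ (i : ℕ)) := by
  set w : Algebra.adjoin ℤ {ω ζ} := ⟨ω ζ, Algebra.self_mem_adjoin_singleton ℤ _⟩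
  set q : (Algebra.adjoin ℤ {ω ζ})[X] := X ^ 3 - C (w - 1) * X ^ 2 - C w * X - 1
  have hq : q.natDegree = 3 := by simp only [q]; compute_degree!
  have hx' : x ∈ Algebra.adjoin (Algebra.adjoin ℤ {ω ζ}) {ζ} := by
    rw [← Subalgebra.mem_restrictScalars ℤ, Algebra.Subalgebra.restrictScalars_adjoin]
    exact Algebra.mem_sup_right hx
  have h := Algebra.mem_span_pow_of_mem_adjoin_singleton (p := q) (by simp only [q]; monicity!)
    (by simp [q, w, pow_three_eq hsum]) hx'
  rwa [hq] at h

-- `ζ⁶` is eliminated through `1 + ζ + ⋯ + ζ⁶ = 0`.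
theorem ω_combination_eq (a₀ a₁ a₂ b₀ b₁ b₂ : L) :
    (a₀ + b₀ * ω ζ) + (a₁ + b₁ * ω ζ) * ζ + (a₂ + b₂ * ω ζ) * ζ ^ 2 =
      (a₀ + b₀ - b₂) + (a₁ + b₀ + b₁ - b₂) * ζ + (a₂ + b₀ + b₁) * ζ ^ 2 + b₁ * ζ ^ 3 +
        b₀ * ζ ^ 4 + (b₁ - b₂) * ζ ^ 5 := by
  unfold ω; linear_combination b₂ * sum_pow_eq_zero hsum

end

theorem linearIndependent_pow_adjoin_ω {K : Type*} [Field K] [CharZero K] {ζ : K}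
    (hζ : IsPrimitiveRoot ζ 7) :
    LinearIndependent (Algebra.adjoin ℤ {ω ζ}) fun i : Fin 3 => ζ ^ (i : ℕ) := by
  have hsum := hζ.geom_sum_eq_zero (by norm_num)
  have hli : LinearIndependent ℤ fun i : Fin 6 => ζ ^ (i : ℕ) := by
    have := (hζ.linearIndependent_pow_rat (by norm_num)).restrict_scalars' ℤ
    rwa [Nat.totient_prime (by norm_num)] at this
  refine Fintype.linearIndependent_iff.2 fun c hc => ?_
  choose a b hab using fun i => exists_int_of_mem_adjoin_ω hsum (c i).2
  simp only [Fin.sum_univ_three, Subalgebra.smul_def, hab, smul_eq_mul, Fin.val_zero, Fin.val_one,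
    Fin.val_two, pow_zero, pow_one, mul_one, ω_combination_eq hsum] at hc
  have h := Fintype.linearIndependent_iff.1 hli
    ![a 0 + b 0 - b 2, a 1 + b 0 + b 1 - b 2, a 2 + b 0 + b 1, b 1, b 0, b 1 - b 2]
    (by simp [Fin.sum_univ_six, zsmul_eq_mul]; linear_combination hc)
  simp only [Fin.forall_fin_succ, Matrix.cons_val_zero, Matrix.cons_val_succ,
    Matrix.cons_val_fin_one, forall_const] at h
  have hab0 : ∀ i, a i = 0 ∧ b i = 0 := by
    intro i; fin_cases i <;> simp only [Fin.zero_eta, Fin.mk_one, Fin.reduceFinMk] <;> omega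
  intro i
  ext
  simp [hab, hab0]

end Cyclotomic7

open Cyclotomic7 in
/-- In ℤ[ζ₇] ⊆ ℚ(ζ₇), the set {1, ζ₇, ζ₇²} is a basis of ℤ[ζ₇] as a module
over O_{ℚ(√-7)} = ℤ[(1+√-7)/2], where (1+√-7)/2 = 1 + ζ₇ + ζ₇² + ζ₇⁴: every element of
ℤ[ζ₇] has a unique expression c₀ + c₁ζ₇ + c₂ζ₇² with cᵢ ∈ O_{ℚ(√-7)}. -/
theorem stmt_15 (ζ : CyclotomicField 7 ℚ) (hζ : IsPrimitiveRoot ζ 7) :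
    ∀ x ∈ Algebra.adjoin ℤ ({ζ} : Set (CyclotomicField 7 ℚ)),
      ∃! c : Fin 3 → Algebra.adjoin ℤ ({1 + ζ + ζ ^ 2 + ζ ^ 4} : Set (CyclotomicField 7 ℚ)),
        (c 0 : CyclotomicField 7 ℚ) + (c 1 : CyclotomicField 7 ℚ) * ζ +
          (c 2 : CyclotomicField 7 ℚ) * ζ ^ 2 = x := by
  intro x hx
  have hcomb : ∀ c : Fin 3 → Algebra.adjoin ℤ {ω ζ},
      Fintype.linearCombination _ (fun i : Fin 3 => ζ ^ (i : ℕ)) c =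
        (c 0 : CyclotomicField 7 ℚ) + c 1 * ζ + c 2 * ζ ^ 2 := by
    intro c
    simp [Fintype.linearCombination_apply, Fin.sum_univ_three, Subalgebra.smul_def]
  obtain ⟨c, rfl⟩ := (Submodule.mem_span_range_iff_exists_fun _).1
    (mem_span_pow_of_mem_adjoin (hζ.geom_sum_eq_zero (by norm_num)) hx)
  refine ⟨c, (hcomb c).symm.trans (Fintype.linearCombination_apply ..), fun d hd => ?_⟩
  exact (linearIndependent_pow_adjoin_ω hζ).fintypeLinearCombination_injective
    ((hcomb d).trans (hd.trans (Fintype.linearCombination_apply ..).symm))
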